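/- Let 0 < ε_1 < … < ε_m be tolerances, let c be the cost values of the dynamic program, and let S_m, …, S_1 be an algorithm output. Then S_1, …, S_m is a progressive simplification for ε_1 < … < ε_m, and it has minimal cumulative size: for every progressive simplification S'_1, …, S'_m for these tolerances, Σ_{k=1}^m |S_k| ≤ Σ_{k=1}^m |S'_k|. -/

import Mathlib

open Metric

noncomputable section

/-- The Euclidean plane. -/
abbrev Pt : Type := EuclideanSpace ℝ (Fin 2)

/-- The subcurve `⟨p i, …, p j⟩`: the union of the segments between consecutive vertices. -/
def subcurve {n : ℕ} (p : Fin n → Pt) (i j : Fin n) : Set Pt :=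
  ⋃ (t : Fin n) (_ : i ≤ t ∧ t < j) (h : (t : ℕ) + 1 < n),
    segment ℝ (p t) (p ⟨(t : ℕ) + 1, h⟩)

/-- The (Hausdorff-distance) error of the shortcut `(i, j)`. -/
def err {n : ℕ} (p : Fin n → Pt) (i j : Fin n) : ℝ :=
  Metric.hausdorffDist (segment ℝ (p i) (p j)) (subcurve p i j)

/-- The edges (consecutive pairs) of a path given as a list of vertices. -/
def edges {n : ℕ} (l : List (Fin n)) : List (Fin n × Fin n) := l.zip l.tail

/-- `l` is a path from `i` to `j` at tolerance `ε`: a strictly increasing sequence of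
indices starting at `i`, ending at `j`, all of whose edges are valid shortcuts for `ε`. -/
def IsPath {n : ℕ} (p : Fin n → Pt) (ε : ℝ) (i j : Fin n) (l : List (Fin n)) : Prop :=
  l.Chain' (· < ·) ∧ l.head? = some i ∧ l.getLast? = some j ∧
    ∀ e ∈ edges l, err p e.1 e.2 ≤ ε

/-- The cost of a path: the sum of the costs of its edges. -/
def pathCost {n : ℕ} {α : Type*} [AddCommMonoid α] (c : Fin n → Fin n → α)
    (l : List (Fin n)) : α :=
  ((edges l).map (fun e => c e.1 e.2)).sum

/-- Minimum cost (natural-valued) of a path from `i` to `j` at tolerance `ε`. -/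
def minCost {n : ℕ} (p : Fin n → Pt) (ε : ℝ) (c : Fin n → Fin n → ℕ) (i j : Fin n) : ℕ :=
  sInf {s : ℕ | ∃ l, IsPath p ε i j l ∧ pathCost c l = s}

/-- Minimum cost (real-valued) of a path from `i` to `j` at tolerance `ε`. -/
def minCostR {n : ℕ} (p : Fin n → Pt) (ε : ℝ) (c : Fin n → Fin n → ℝ) (i j : Fin n) : ℝ :=
  sInf {s : ℝ | ∃ l, IsPath p ε i j l ∧ pathCost c l = s}

/-- `l` is a minimum-cost path from `i` to `j` at tolerance `ε` w.r.t. cost `c`. -/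
def IsMinPath {n : ℕ} (p : Fin n → Pt) (ε : ℝ) (c : Fin n → Fin n → ℕ) (i j : Fin n)
    (l : List (Fin n)) : Prop :=
  IsPath p ε i j l ∧ ∀ l', IsPath p ε i j l' → pathCost c l ≤ pathCost c l'

/-- `L'` is obtained from `L` by replacing each edge `(i, j)` of `L` by a minimum-cost
path from `i` to `j` at tolerance `ε`, and concatenating. -/
def Refines {n : ℕ} (p : Fin n → Pt) (ε : ℝ) (c : Fin n → Fin n → ℕ)
    (L L' : List (Fin n)) : Prop :=
  ∃ f : Fin n × Fin n → List (Fin n),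
    (∀ e ∈ edges L, IsMinPath p ε c e.1 e.2 (f e)) ∧
    L' = L.take 1 ++ ((edges L).map (fun e => (f e).tail)).flatten

/-- `S 1, …, S m` is a progressive simplification for the tolerances `ε 1 < … < ε m`:
each `S k` is an `ε k`-simplification (a path from `v0` to `v1`), and every vertex of
`S (k+1)` is a vertex of `S k`. -/
def ProgSimp {n : ℕ} (p : Fin n → Pt) (m : ℕ) (ε : ℕ → ℝ) (v0 v1 : Fin n)
    (S : ℕ → List (Fin n)) : Prop :=
  (∀ k, 1 ≤ k → k ≤ m → IsPath p (ε k) v0 v1 (S k)) ∧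
  (∀ k, 1 ≤ k → k < m → ∀ v ∈ S (k + 1), v ∈ S k)

/-!
The cost `c k` of an `ε k`-path is at most the total number of edges of any progressive
simplification that has this path at level `k` (induction on `k`): the level below passes
through its vertices, so it splits into paths between consecutive vertices, each costing at least
the minimum in the recursion for `c k`. The algorithm output refines with paths realising these
minima, so for it equality holds. Comparing at level `m`, where `S m` has minimal `c m`-cost, gives
the claim, since each `S k` has one vertex more than it has edges.
-/

section Paths

variable {n : ℕ} {p : Fin n → Pt} {ε ε' : ℝ} {i j : Fin n}

@[simp]
lemma edges_cons_cons (a b : Fin n) (t : List (Fin n)) :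
    edges (a :: b :: t) = (a, b) :: edges (b :: t) := rfl

@[simp]
lemma edges_singleton (a : Fin n) : edges [a] = [] := rfl

lemma isPath_iff {l : List (Fin n)} :
    IsPath p ε i j l ↔ l.IsChain (· < ·) ∧ l.head? = some i ∧ l.getLast? = some j ∧
      ∀ e ∈ edges l, err p e.1 e.2 ≤ ε :=
  Iff.rfl

lemma isPath_singleton_iff {a : Fin n} : IsPath p ε i j [a] ↔ a = i ∧ a = j := by
  simp [isPath_iff, eq_comm]

lemma isPath_cons_cons_iff {a b : Fin n} {t : List (Fin n)} :
    IsPath p ε i j (a :: b :: t) ↔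
      a = i ∧ a < b ∧ err p a b ≤ ε ∧ IsPath p ε b j (b :: t) := by
  simp only [isPath_iff, List.isChain_cons_cons, List.head?_cons, Option.some.injEq,
    List.getLast?_cons_cons, edges_cons_cons, List.forall_mem_cons, true_and]
  tauto

lemma IsPath.eq_cons_tail {l : List (Fin n)} (h : IsPath p ε i j l) : l = i :: l.tail := by
  obtain ⟨-, hh, -, -⟩ := h
  cases l <;> simp_all

lemma IsPath.start_mem {l : List (Fin n)} (h : IsPath p ε i j l) : i ∈ l := by
  rw [h.eq_cons_tail]; exact List.mem_cons_self

lemma IsPath.end_mem {l : List (Fin n)} (h : IsPath p ε i j l) : j ∈ l :=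
  List.mem_of_getLast? h.2.2.1

lemma IsPath.length_eq {l : List (Fin n)} (h : IsPath p ε i j l) :
    l.length = (edges l).length + 1 := by
  rw [h.eq_cons_tail]; simp [edges]

lemma IsPath.lt_of_mem_edges {l : List (Fin n)} (h : IsPath p ε i j l) {e : Fin n × Fin n}
    (he : e ∈ edges l) : e.1 < e.2 := by
  induction l generalizing i with
  | nil => simp [edges] at he
  | cons a t ih =>
    rcases t with _ | ⟨b, t⟩
    · simp at he
    · obtain ⟨-, hab, -, hrest⟩ := isPath_cons_cons_iff.1 h
      rcases List.mem_cons.1 he with rfl | he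
      exacts [hab, ih hrest he]

lemma IsPath.mem_bounds {l : List (Fin n)} (h : IsPath p ε i j l) {v : Fin n} (hv : v ∈ l) :
    i ≤ v ∧ v ≤ j := by
  induction l generalizing i v with
  | nil => simp at hv
  | cons a t ih =>
    rcases t with _ | ⟨b, t⟩
    · obtain ⟨rfl, rfl⟩ := isPath_singleton_iff.1 h
      simp_all
    · obtain ⟨rfl, hab, -, hrest⟩ := isPath_cons_cons_iff.1 h
      rcases List.mem_cons.1 hv with rfl | hv
      · exact ⟨le_rfl, hab.le.trans (ih hrest hrest.end_mem).1⟩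
      · exact (ih hrest hv).imp_left hab.le.trans

lemma IsPath.append {x : Fin n} {A B : List (Fin n)} (hA : IsPath p ε i x A)
    (hB : IsPath p ε x j B) : IsPath p ε i j (A ++ B.tail) := by
  induction A generalizing i with
  | nil => simp [isPath_iff] at hA
  | cons a t ih =>
    rcases t with _ | ⟨b, t⟩
    · obtain ⟨rfl, rfl⟩ := isPath_singleton_iff.1 hA
      rwa [List.singleton_append, ← hB.eq_cons_tail]
    · obtain ⟨rfl, hab, herr, hrest⟩ := isPath_cons_cons_iff.1 hA
      exact isPath_cons_cons_iff.2 ⟨rfl, hab, herr, ih hrest⟩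

lemma IsPath.edges_append {x : Fin n} {A B : List (Fin n)} (hA : IsPath p ε i x A)
    (hB : IsPath p ε' x j B) : edges (A ++ B.tail) = edges A ++ edges B := by
  induction A generalizing i with
  | nil => simp [isPath_iff] at hA
  | cons a t ih =>
    rcases t with _ | ⟨b, t⟩
    · obtain ⟨rfl, rfl⟩ := isPath_singleton_iff.1 hA
      rw [List.singleton_append, ← hB.eq_cons_tail, edges_singleton, List.nil_append]
    · have := ih (isPath_cons_cons_iff.1 hA).2.2.2
      rw [List.cons_append] at this
      simp [this]

lemma IsPath.exists_split {M : List (Fin n)} (h : IsPath p ε i j M) {v : Fin n} (hv : v ∈ M) :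
    ∃ A B, M = A ++ B.tail ∧ IsPath p ε i v A ∧ IsPath p ε v j B := by
  induction M generalizing i with
  | nil => simp at hv
  | cons a t ih =>
    rcases List.mem_cons.1 hv with rfl | hv
    · obtain rfl : v = i := Option.some.inj (isPath_iff.1 h).2.1
      exact ⟨[v], v :: t, rfl, isPath_singleton_iff.2 ⟨rfl, rfl⟩, h⟩
    · rcases t with _ | ⟨b, t⟩
      · simp at hv
      · obtain ⟨rfl, hab, herr, hrest⟩ := isPath_cons_cons_iff.1 h
        obtain ⟨A, B, hM, hA, hB⟩ := ih hrest hv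
        obtain ⟨A, rfl⟩ : ∃ A', A = b :: A' := ⟨_, hA.eq_cons_tail⟩
        exact ⟨a :: b :: A, B, by rw [hM]; rfl,
          isPath_cons_cons_iff.2 ⟨rfl, hab, herr, hA⟩, hB⟩

end Paths

section Costs

variable {n : ℕ} {p : Fin n → Pt} {ε ε' : ℝ} {i j : Fin n}

@[simp]
lemma pathCost_singleton {α : Type*} [AddCommMonoid α] (c : Fin n → Fin n → α) (a : Fin n) :
    pathCost c [a] = 0 := rfl

@[simp]
lemma pathCost_cons_cons {α : Type*} [AddCommMonoid α] (c : Fin n → Fin n → α)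
    (a b : Fin n) (t : List (Fin n)) :
    pathCost c (a :: b :: t) = c a b + pathCost c (b :: t) := by
  simp [pathCost]

lemma pathCost_add {α : Type*} [AddCommMonoid α] (c d : Fin n → Fin n → α)
    (l : List (Fin n)) : pathCost (fun a b => c a b + d a b) l = pathCost c l + pathCost d l := by
  simp [pathCost, List.sum_map_add]

@[simp]
lemma pathCost_one (l : List (Fin n)) : pathCost (fun _ _ => (1 : ℕ)) l = (edges l).length := by
  simp [pathCost]

lemma IsPath.pathCost_congr {α : Type*} [AddCommMonoid α] {c d : Fin n → Fin n → α}
    {l : List (Fin n)} (h : IsPath p ε i j l)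
    (hcd : ∀ a b, a < b → err p a b ≤ ε → c a b = d a b) : pathCost c l = pathCost d l := by
  unfold pathCost
  congr 1
  exact List.map_congr_left fun e he => hcd _ _ (h.lt_of_mem_edges he) (h.2.2.2 e he)

lemma IsPath.pathCost_append {α : Type*} [AddCommMonoid α] (c : Fin n → Fin n → α)
    {x : Fin n} {A B : List (Fin n)} (hA : IsPath p ε i x A) (hB : IsPath p ε' x j B) :
    pathCost c (A ++ B.tail) = pathCost c A + pathCost c B := by
  simp [pathCost, hA.edges_append hB]

lemma IsMinPath.minCost_eq {c : Fin n → Fin n → ℕ} {l : List (Fin n)}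
    (h : IsMinPath p ε c i j l) : minCost p ε c i j = pathCost c l :=
  le_antisymm (Nat.sInf_le ⟨l, h.1, rfl⟩)
    (le_csInf ⟨_, l, h.1, rfl⟩ fun _ ⟨l', hl', hs⟩ => hs ▸ h.2 l' hl')

/-- `M` splits at the vertices of `L` into subpaths between consecutive vertices of `L`. -/
lemma IsPath.pathCost_minCost_le {c : Fin n → Fin n → ℕ} {L M : List (Fin n)}
    (hL : IsPath p ε i j L) (hM : IsPath p ε' i j M) (hLM : ∀ v ∈ L, v ∈ M) :
    pathCost (minCost p ε' c) L ≤ pathCost c M := by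
  induction L generalizing i M with
  | nil => simp [isPath_iff] at hL
  | cons a t ih =>
    rcases t with _ | ⟨b, t⟩
    · simp
    · obtain ⟨rfl, -, -, hrest⟩ := isPath_cons_cons_iff.1 hL
      obtain ⟨A, B, rfl, hA, hB⟩ := hM.exists_split (hLM b (by simp))
      have hsub : ∀ v ∈ b :: t, v ∈ B := by
        intro v hv
        rcases List.mem_append.1 (hLM v (List.mem_cons_of_mem _ hv)) with hvA | hvB
        · rw [le_antisymm (hA.mem_bounds hvA).2 (hrest.mem_bounds hv).1]
          exact hB.start_mem
        · exact List.mem_of_mem_tail hvB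
      calc pathCost (minCost p ε' c) (a :: b :: t)
          = minCost p ε' c a b + pathCost (minCost p ε' c) (b :: t) := pathCost_cons_cons ..
        _ ≤ pathCost c A + pathCost c B :=
          add_le_add (Nat.sInf_le ⟨A, hA, rfl⟩) (ih hrest hB hsub)
        _ = pathCost c (A ++ B.tail) := (hA.pathCost_append c hB).symm

end Costs

section Refinement

variable {n : ℕ} {p : Fin n → Pt} {ε ε' : ℝ} {i j : Fin n}

def replaceEdges (L : List (Fin n)) (f : Fin n × Fin n → List (Fin n)) : List (Fin n) :=
  L.take 1 ++ ((edges L).map fun e => (f e).tail).flatten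

lemma refines_iff {c : Fin n → Fin n → ℕ} {L L' : List (Fin n)} :
    Refines p ε c L L' ↔
      ∃ f, (∀ e ∈ edges L, IsMinPath p ε c e.1 e.2 (f e)) ∧ L' = replaceEdges L f :=
  Iff.rfl

@[simp]
lemma replaceEdges_singleton (a : Fin n) (f : Fin n × Fin n → List (Fin n)) :
    replaceEdges [a] f = [a] := by
  simp [replaceEdges]

lemma replaceEdges_cons_cons {a b : Fin n} {t : List (Fin n)} {f : Fin n × Fin n → List (Fin n)}
    (hf : IsPath p ε a b (f (a, b))) :
    replaceEdges (a :: b :: t) f = f (a, b) ++ (replaceEdges (b :: t) f).tail := by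
  rw [hf.eq_cons_tail]
  simp [replaceEdges]

variable {L : List (Fin n)} {f : Fin n × Fin n → List (Fin n)}

lemma IsPath.isPath_replaceEdges (hL : IsPath p ε i j L)
    (hf : ∀ e ∈ edges L, IsPath p ε' e.1 e.2 (f e)) : IsPath p ε' i j (replaceEdges L f) := by
  induction L generalizing i with
  | nil => simp [isPath_iff] at hL
  | cons a t ih =>
    rcases t with _ | ⟨b, t⟩
    · obtain ⟨rfl, rfl⟩ := isPath_singleton_iff.1 hL
      exact isPath_singleton_iff.2 ⟨rfl, rfl⟩
    · obtain ⟨rfl, -, -, hrest⟩ := isPath_cons_cons_iff.1 hL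
      have hab := hf (a, b) (by simp)
      rw [replaceEdges_cons_cons hab]
      exact hab.append (ih hrest fun e he => hf e (by simp [he]))

lemma IsPath.pathCost_replaceEdges {α : Type*} [AddCommMonoid α] (c : Fin n → Fin n → α)
    (hL : IsPath p ε i j L) (hf : ∀ e ∈ edges L, IsPath p ε' e.1 e.2 (f e)) :
    pathCost c (replaceEdges L f) = pathCost (fun a b => pathCost c (f (a, b))) L := by
  induction L generalizing i with
  | nil => simp [isPath_iff] at hL
  | cons a t ih =>
    rcases t with _ | ⟨b, t⟩
    · simp
    · obtain ⟨rfl, -, -, hrest⟩ := isPath_cons_cons_iff.1 hL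
      have hab := hf (a, b) (by simp)
      have hrest' : ∀ e ∈ edges (b :: t), IsPath p ε' e.1 e.2 (f e) :=
        fun e he => hf e (by simp [he])
      rw [replaceEdges_cons_cons hab, hab.pathCost_append c (hrest.isPath_replaceEdges hrest'),
        ih hrest hrest', pathCost_cons_cons]

lemma IsPath.subset_replaceEdges (hL : IsPath p ε i j L)
    (hf : ∀ e ∈ edges L, IsPath p ε' e.1 e.2 (f e)) : ∀ v ∈ L, v ∈ replaceEdges L f := by
  induction L generalizing i with
  | nil => simp [isPath_iff] at hL
  | cons a t ih =>
    rcases t with _ | ⟨b, t⟩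
    · simp
    · obtain ⟨rfl, -, -, hrest⟩ := isPath_cons_cons_iff.1 hL
      have hab := hf (a, b) (by simp)
      have hrest' : ∀ e ∈ edges (b :: t), IsPath p ε' e.1 e.2 (f e) :=
        fun e he => hf e (by simp [he])
      rw [replaceEdges_cons_cons hab]
      intro v hv
      rcases List.mem_cons.1 hv with rfl | hv
      · exact List.mem_append_left _ hab.start_mem
      · have hR := (hrest.isPath_replaceEdges hrest').eq_cons_tail
        rcases List.mem_cons.1 (hR ▸ ih hrest hrest' v hv) with rfl | hv
        · exact List.mem_append_left _ hab.end_mem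
        · exact List.mem_append_right _ hv

variable {c : Fin n → Fin n → ℕ} {L' : List (Fin n)}

lemma Refines.isPath (h : Refines p ε c L L') (hL : IsPath p ε' i j L) : IsPath p ε i j L' := by
  obtain ⟨f, hf, rfl⟩ := refines_iff.1 h
  exact hL.isPath_replaceEdges fun e he => (hf e he).1

lemma Refines.subset (h : Refines p ε c L L') (hL : IsPath p ε' i j L) : ∀ v ∈ L, v ∈ L' := by
  obtain ⟨f, hf, rfl⟩ := refines_iff.1 h
  exact hL.subset_replaceEdges fun e he => (hf e he).1

lemma Refines.pathCost_eq (h : Refines p ε c L L') (hL : IsPath p ε' i j L) :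
    pathCost c L' = pathCost (minCost p ε c) L := by
  obtain ⟨f, hf, rfl⟩ := refines_iff.1 h
  rw [hL.pathCost_replaceEdges c fun e he => (hf e he).1]
  unfold pathCost
  congr 1
  exact List.map_congr_left fun e he => ((hf e he).minCost_eq).symm

end Refinement

section Levels

variable {n m : ℕ} {p : Fin n → Pt} {ε : ℕ → ℝ} {c : ℕ → Fin n → Fin n → ℕ} {v₀ v₁ : Fin n}
  {S : ℕ → List (Fin n)}

lemma IsPath.pathCost_eq_length {i j : Fin n} {L : List (Fin n)} (hL : IsPath p (ε 1) i j L)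
    (hc1 : ∀ i j : Fin n, i < j → err p i j ≤ ε 1 → c 1 i j = 1) :
    pathCost (c 1) L = (edges L).length := by
  rw [← pathCost_one]
  exact hL.pathCost_congr hc1

lemma IsPath.pathCost_succ_eq {i j : Fin n} {L : List (Fin n)} {k : ℕ}
    (hL : IsPath p (ε (k + 1)) i j L) (hk : 1 ≤ k) (hkm : k + 1 ≤ m)
    (hck : ∀ k, 2 ≤ k → k ≤ m → ∀ i j : Fin n, i < j → err p i j ≤ ε k →
      c k i j = 1 + minCost p (ε (k - 1)) (c (k - 1)) i j) :
    pathCost (c (k + 1)) L = (edges L).length + pathCost (minCost p (ε k) (c k)) L := by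
  rw [← pathCost_one, ← pathCost_add]
  exact hL.pathCost_congr fun a b hab herr => hck (k + 1) (by omega) hkm a b hab herr

lemma progSimp_of_refines (hSm : IsPath p (ε m) v₀ v₁ (S m))
    (hSk : ∀ k, 1 ≤ k → k < m → Refines p (ε k) (c k) (S (k + 1)) (S k)) :
    ProgSimp p m ε v₀ v₁ S := by
  have hpath : ∀ k, 1 ≤ k → k ≤ m → IsPath p (ε k) v₀ v₁ (S k) := by
    intro k hk hkm
    induction hkm using Nat.decreasingInduction with
    | self => exact hSm
    | of_succ k hkm ih => exact (hSk k hk hkm).isPath (ih (by omega))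
  exact ⟨hpath, fun k hk hkm => (hSk k hk hkm).subset (hpath (k + 1) (by omega) hkm)⟩

lemma ProgSimp.sum_length (hS : ProgSimp p m ε v₀ v₁ S) :
    ∑ k ∈ Finset.Icc 1 m, (S k).length = ∑ k ∈ Finset.Icc 1 m, (edges (S k)).length + m := by
  rw [Finset.sum_congr rfl fun k hk =>
    (hS.1 k (Finset.mem_Icc.1 hk).1 (Finset.mem_Icc.1 hk).2).length_eq, Finset.sum_add_distrib]
  simp

lemma ProgSimp.pathCost_le (hS : ProgSimp p m ε v₀ v₁ S)
    (hc1 : ∀ i j : Fin n, i < j → err p i j ≤ ε 1 → c 1 i j = 1)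
    (hck : ∀ k, 2 ≤ k → k ≤ m → ∀ i j : Fin n, i < j → err p i j ≤ ε k →
      c k i j = 1 + minCost p (ε (k - 1)) (c (k - 1)) i j)
    {k : ℕ} (hk : 1 ≤ k) (hkm : k ≤ m) :
    pathCost (c k) (S k) ≤ ∑ t ∈ Finset.Icc 1 k, (edges (S t)).length := by
  induction k, hk using Nat.le_induction with
  | base => simp [(hS.1 1 le_rfl hkm).pathCost_eq_length hc1]
  | succ k hk ih =>
    have hS₁ := hS.1 (k + 1) (by omega) hkm
    have hsplit := hS₁.pathCost_minCost_le (c := c k) (hS.1 k hk (by omega)) (hS.2 k hk hkm)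
    rw [Finset.sum_Icc_succ_top (by omega), hS₁.pathCost_succ_eq hk hkm hck]
    have hprev := ih (by omega)
    omega

lemma ProgSimp.pathCost_eq_of_refines (hS : ProgSimp p m ε v₀ v₁ S)
    (hc1 : ∀ i j : Fin n, i < j → err p i j ≤ ε 1 → c 1 i j = 1)
    (hck : ∀ k, 2 ≤ k → k ≤ m → ∀ i j : Fin n, i < j → err p i j ≤ ε k →
      c k i j = 1 + minCost p (ε (k - 1)) (c (k - 1)) i j)
    (hSk : ∀ k, 1 ≤ k → k < m → Refines p (ε k) (c k) (S (k + 1)) (S k))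
    {k : ℕ} (hk : 1 ≤ k) (hkm : k ≤ m) :
    pathCost (c k) (S k) = ∑ t ∈ Finset.Icc 1 k, (edges (S t)).length := by
  induction k, hk using Nat.le_induction with
  | base => simp [(hS.1 1 le_rfl hkm).pathCost_eq_length hc1]
  | succ k hk ih =>
    have hS₁ := hS.1 (k + 1) (by omega) hkm
    rw [Finset.sum_Icc_succ_top (by omega), hS₁.pathCost_succ_eq hk hkm hck,
      ← (hSk k hk hkm).pathCost_eq hS₁, ih (by omega), add_comm]

end Levels

/-- An algorithm output `S m, …, S 1` is a progressive simplification
for `ε 1 < … < ε m`, and it has minimal cumulative size among all progressive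
simplifications. -/
theorem algorithm_output_minimal {n m : ℕ} (hn : 2 ≤ n) (hm : 1 ≤ m) (p : Fin n → Pt)
    (ε : ℕ → ℝ)
    (c : ℕ → Fin n → Fin n → ℕ)
    (hc1 : ∀ i j : Fin n, i < j → err p i j ≤ ε 1 → c 1 i j = 1)
    (hck : ∀ k, 2 ≤ k → k ≤ m → ∀ i j : Fin n, i < j → err p i j ≤ ε k →
      c k i j = 1 + minCost p (ε (k - 1)) (c (k - 1)) i j)
    (S : ℕ → List (Fin n))
    (hSm : IsMinPath p (ε m) (c m) (⟨0, by omega⟩ : Fin n) (⟨n - 1, by omega⟩ : Fin n) (S m))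
    (hSk : ∀ k, 1 ≤ k → k < m → Refines p (ε k) (c k) (S (k + 1)) (S k)) :
    ProgSimp p m ε (⟨0, by omega⟩ : Fin n) (⟨n - 1, by omega⟩ : Fin n) S ∧
    ∀ S' : ℕ → List (Fin n),
      ProgSimp p m ε (⟨0, by omega⟩ : Fin n) (⟨n - 1, by omega⟩ : Fin n) S' →
      ∑ k ∈ Finset.Icc 1 m, (S k).length ≤ ∑ k ∈ Finset.Icc 1 m, (S' k).length := by
  have hS := progSimp_of_refines hSm.1 hSk
  refine ⟨hS, fun S' hS' => ?_⟩
  have hopt := hSm.2 _ (hS'.1 m hm le_rfl)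
  rw [hS.pathCost_eq_of_refines hc1 hck hSk hm le_rfl] at hopt
  have hlower := hS'.pathCost_le hc1 hck hm le_rfl
  rw [hS.sum_length, hS'.sum_length]
  omega
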